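/- Suppose m ≤ d ≤ m + n, let π : ℝ^{n+m} → ℝⁿ be the projection π(x, x_{n+1}, …, x_{n+m}) = x, and let E ⊂ ℝ^{n+m}. If H^{d-m}(π(E)) = 0 then H^d(E) = 0. -/

import Mathlib

open MeasureTheory Metric Set
open scoped ENNReal NNReal Topology

noncomputable section

abbrev Euc (n : ℕ) : Type := EuclideanSpace ℝ (Fin n)

/-- `f'` is the weak (distributional) derivative of `f` on the open set `Ω`:
integration by parts against smooth compactly supported test functions. -/
def HasWeakDerivOn {n : ℕ} {F : Type*} [NormedAddCommGroup F] [NormedSpace ℝ F]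
    (f : Euc n → F) (f' : Euc n → (Euc n →L[ℝ] F)) (Ω : Set (Euc n)) : Prop :=
  LocallyIntegrableOn f Ω volume ∧
  AEStronglyMeasurable f' (volume.restrict Ω) ∧
  ∀ φ : Euc n → ℝ, ContDiff ℝ (⊤ : ℕ∞) φ → HasCompactSupport φ → tsupport φ ⊆ Ω →
    ∀ v : Euc n, ∫ x in Ω, φ x • f' x v = - ∫ x in Ω, (fderiv ℝ φ x v) • f x

/-- membership in the local Sobolev class `W^{1,p}_loc(Ω;F)`, with weak derivative `f'`. -/
def MemW1pLoc {n : ℕ} {F : Type*} [NormedAddCommGroup F] [NormedSpace ℝ F]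
    (p : ℝ) (f : Euc n → F) (f' : Euc n → (Euc n →L[ℝ] F)) (Ω : Set (Euc n)) : Prop :=
  HasWeakDerivOn f f' Ω ∧
  ∀ K : Set (Euc n), K ⊆ Ω → IsCompact K →
    (∫⁻ x in K, ENNReal.ofReal (‖f x‖ ^ p + ‖f' x‖ ^ p)) < ⊤

/-- membership in the Sobolev class `W^{1,p}(Ω;F)`, with weak derivative `f'`. -/
def MemW1p {n : ℕ} {F : Type*} [NormedAddCommGroup F] [NormedSpace ℝ F]
    (p : ℝ) (f : Euc n → F) (f' : Euc n → (Euc n →L[ℝ] F)) (Ω : Set (Euc n)) : Prop :=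
  HasWeakDerivOn f f' Ω ∧
  (∫⁻ x in Ω, ENNReal.ofReal (‖f x‖ ^ p + ‖f' x‖ ^ p)) < ⊤

/-- `f` is precisely represented on `Ω`: at every point where the limit of ball
averages exists, `f` equals that limit. -/
def PreciselyRepresented {n : ℕ} {F : Type*} [NormedAddCommGroup F] [NormedSpace ℝ F]
    (f : Euc n → F) (Ω : Set (Euc n)) : Prop :=
  ∀ x ∈ Ω, ∀ c : F,
    Filter.Tendsto (fun r : ℝ => ⨍ y in ball x r, f y) (𝓝[>] (0:ℝ)) (𝓝 c) → f x = c

/-- the `m`-dimensional Jacobian `|J_m L|` of a linear map `L : ℝ^n → ℝ^m` (`m ≤ n`):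
`√(det (L L*))`, which by Cauchy–Binet is the square root of the sum of the squares
of the determinants of the `m×m` minors of the matrix of `L`. -/
def jacDown {n m : ℕ} (L : Euc n →L[ℝ] Euc m) : ℝ :=
  Real.sqrt (LinearMap.det ((L.comp (ContinuousLinearMap.adjoint L)).toLinearMap))

/-- the `n`-dimensional Jacobian `|J_n L|` of a linear map `L : ℝ^n → ℝ^k` (`k ≥ n`):
`√(det (L* L))`, which by Cauchy–Binet is the square root of the sum of the squares
of the determinants of the `n×n` minors of the matrix of `L`. -/
def jacUp {n k : ℕ} (L : Euc n →L[ℝ] Euc k) : ℝ :=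
  Real.sqrt (LinearMap.det (((ContinuousLinearMap.adjoint L).comp L).toLinearMap))

/-- the pair `(x, y) ∈ ℝ^{n+m}` -/
def graphPt {n m : ℕ} (x : Euc n) (y : Euc m) : Euc (n + m) :=
  (WithLp.equiv 2 _).symm (Fin.append (WithLp.equiv 2 _ x) (WithLp.equiv 2 _ y))

/-- the graph mapping `f̄(x) = (x, f(x)) ∈ ℝ^{n+m}` -/
def graphMap {n m : ℕ} (f : Euc n → Euc m) (x : Euc n) : Euc (n + m) := graphPt x (f x)

/-- the differential of the graph mapping: `v ↦ (v, L v)` -/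
def graphDeriv {n m : ℕ} (L : Euc n →L[ℝ] Euc m) : Euc n →L[ℝ] Euc (n + m) :=
  (PiLp.continuousLinearEquiv 2 ℝ _).symm.toContinuousLinearMap.comp
    (ContinuousLinearMap.pi (fun i : Fin (n + m) =>
      Fin.addCases (fun j : Fin n => (EuclideanSpace.proj j : Euc n →L[ℝ] ℝ))
        (fun j : Fin m => (EuclideanSpace.proj j : Euc m →L[ℝ] ℝ).comp L) i))

/-- `S` is countably `H^d` rectifiable: up to an `H^d`-null set, `S` is covered by
countably many Lipschitz images of subsets of `ℝ^d`. -/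
def CountablyRectifiable {X : Type*} [EMetricSpace X] [MeasurableSpace X] [BorelSpace X]
    (d : ℕ) (S : Set X) : Prop :=
  ∃ (E : ℕ → Set (Euc d)) (g : ℕ → Euc d → X),
    (∀ k, ∃ K : ℝ≥0, LipschitzOnWith K (g k) (E k)) ∧
    μH[(d : ℝ)] (S \ ⋃ k, g k '' E k) = 0

/-- the `q`-dimensional Hausdorff content `H^q_∞(E)`:
`inf Σ_j α_q (diam E_j / 2)^q` over countable coverings, `α_q = π^{q/2}/Γ(q/2+1)`. -/
def hausdorffContent {X : Type*} [PseudoEMetricSpace X] (q : ℝ) (E : Set X) : ℝ≥0∞ :=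
  ⨅ (t : ℕ → Set X) (_ : E ⊆ ⋃ k, t k),
    ∑' k, ENNReal.ofReal (Real.pi ^ (q / 2) / Real.Gamma (q / 2 + 1)) *
      (EMetric.diam (t k) / 2) ^ q

/-- the `p`-capacity `γ_p(E)`: the infimum of `∫ (|u|^p + |∇u|^p)` over Sobolev
functions `u ∈ W^{1,p}(ℝ^n)` with `u ≥ 1` on a neighborhood of `E`. -/
def pCapacity {n : ℕ} (p : ℝ) (E : Set (Euc n)) : ℝ≥0∞ :=
  ⨅ (u : Euc n → ℝ) (u' : Euc n → (Euc n →L[ℝ] ℝ))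
    (_ : MemW1p p u u' univ)
    (_ : ∃ U : Set (Euc n), IsOpen U ∧ E ⊆ U ∧ ∀ x ∈ U, 1 ≤ u x),
    ∫⁻ x, ENNReal.ofReal (|u x| ^ p + ‖u' x‖ ^ p)

/-- the Lorentz `L^{m,1}(Ω)` norm: `∫_0^∞ μ_g(s)^{1/m} ds` where `μ_g` is the
distribution function of `g` on `Ω`. -/
def lorentzNorm {n : ℕ} (m : ℝ) (Ω : Set (Euc n)) (g : Euc n → ℝ) : ℝ≥0∞ :=
  ∫⁻ s in Ioi (0:ℝ), (volume {x ∈ Ω | s < |g x|}) ^ (1 / m)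

/-- projection of `ℝ^{n+m}` onto the first `n` coordinates -/
def projE (n m : ℕ) (x : Euc (n + m)) : Euc n :=
  (WithLp.equiv 2 _).symm fun i : Fin n => (WithLp.equiv 2 _ x) (Fin.castAdd m i)

/-- the upper Lebesgue integral `∫* f dμ` -/
def upperLintegral {α : Type*} [MeasurableSpace α] (μ : Measure α) (f : α → ℝ≥0∞) : ℝ≥0∞ :=
  ⨅ (g : α → ℝ≥0∞) (_ : Measurable g) (_ : ∀ a, f a ≤ g a), ∫⁻ a, g a ∂μ

/-- i.i.d. standard Gaussian `N × nn` matrix ensemble. The column span of such a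
random matrix is (a.s.) an `nn`-dimensional subspace of `ℝ^N` whose distribution is
exactly the normalized Haar (rotation-invariant) measure on the Grassmannian `G(N,nn)`. -/
def gaussianMatrix (N nn : ℕ) : Measure (Fin N → Fin nn → ℝ) :=
  Measure.pi fun _ => Measure.pi fun _ => ProbabilityTheory.gaussianReal 0 1

/-- column span of a matrix, as a subspace of `ℝ^N` -/
def colSpan {N nn : ℕ} (A : Fin N → Fin nn → ℝ) : Submodule ℝ (Euc N) :=
  Submodule.span ℝ (Set.range fun j : Fin nn => ((WithLp.equiv 2 _).symm fun i => A i j : Euc N))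

/-- the `nn`-dimensional integralgeometric measure of `E ⊆ ℝ^N`:
`I^nn(E) = ∫_{G(N,nn)} ∫_V N(P_V, E, y) dH^nn(y) dσ_{N,nn}(V)`,
where `N(P_V,E,y)` is the number of points of `E` in `P_V⁻¹{y}` (here expressed as
`Σ' 1` over that set) and the normalized Haar measure `σ_{N,nn}` on the Grassmannian
is realized as the distribution of the column span of a standard Gaussian matrix. -/
def intGeo (nn : ℕ) {N : ℕ} (E : Set (Euc N)) : ℝ≥0∞ :=
  ∫⁻ A, (∫⁻ y in (colSpan A : Set (Euc N)),
      ∑' _ : ↥(E ∩ {x | ((Submodule.orthogonalProjection (colSpan A) x : Euc N)) = y}), (1:ℝ≥0∞)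
    ∂(μH[(nn : ℝ)])) ∂(gaussianMatrix N nn)

/-- Hölder continuity of `f` on `Ω`. -/
def HolderCont {n m : ℕ} (f : Euc n → Euc m) (Ω : Set (Euc n)) : Prop :=
  ∃ C α : ℝ, 0 < C ∧ 0 < α ∧ α ≤ 1 ∧
    ∀ x ∈ Ω, ∀ y ∈ Ω, ‖f x - f y‖ ≤ C * ‖x - y‖ ^ α


lemma projE_apply (n m : ℕ) (x : Euc (n+m)) (i : Fin n) :
    projE n m x i = x (Fin.castAdd m i) := rfl

lemma sqrt_add_le' (A B : ℝ) (hA : 0 ≤ A) (hB : 0 ≤ B) :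
    Real.sqrt (A + B) ≤ Real.sqrt A + Real.sqrt B := by
  have h1 : A + B ≤ (Real.sqrt A + Real.sqrt B) ^ 2 := by
    nlinarith [Real.sq_sqrt hA, Real.sq_sqrt hB, Real.sqrt_nonneg A, Real.sqrt_nonneg B]
  calc Real.sqrt (A + B) ≤ Real.sqrt ((Real.sqrt A + Real.sqrt B) ^ 2) := Real.sqrt_le_sqrt h1
  _ = Real.sqrt A + Real.sqrt B := Real.sqrt_sq (by positivity)

lemma abs_coord_le_norm {N : ℕ} (x : Euc N) (j : Fin N) : |x j| ≤ ‖x‖ := by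
  rw [EuclideanSpace.norm_eq, ← Real.sqrt_sq_eq_abs]
  apply Real.sqrt_le_sqrt
  have := Finset.single_le_sum (f := fun i => ‖x i‖ ^ 2) (fun i _ => by positivity)
    (Finset.mem_univ j)
  simpa [Real.norm_eq_abs, sq_abs] using this

lemma dist_le_split (n m : ℕ) (x y : Euc (n+m)) :
    dist x y ≤ dist (projE n m x) (projE n m y) +
      Real.sqrt (∑ i : Fin m, (x (Fin.natAdd n i) - y (Fin.natAdd n i)) ^ 2) := by
  have hπ : dist (projE n m x) (projE n m y)
      = Real.sqrt (∑ i : Fin n, dist (x (Fin.castAdd m i)) (y (Fin.castAdd m i)) ^ 2) := by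
    rw [EuclideanSpace.dist_eq]; rfl
  have hsq : ∀ a b : ℝ, dist a b ^ 2 = (a - b) ^ 2 := by
    intro a b; rw [Real.dist_eq, sq_abs]
  rw [EuclideanSpace.dist_eq, Fin.sum_univ_add (f := fun j => dist (x j) (y j) ^ 2)]
  refine (sqrt_add_le' _ _ (by positivity) (by positivity)).trans ?_
  rw [hπ]
  exact add_le_add le_rfl (le_of_eq (by simp only [hsq]))

set_option maxHeartbeats 2000000 in
lemma key (m n : ℕ) (d : ℝ) (hm : (m:ℝ) < d) (R : ℝ) (hR : 0 ≤ R)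
    (E : Set (Euc (n+m))) (hE : ∀ x ∈ E, ‖x‖ ≤ R)
    (h : μH[d - (m:ℝ)] (projE n m '' E) = 0) : μH[d] E = 0 := by
  set s : ℝ := d - (m:ℝ) with hs_def
  have hs : 0 < s := by simp only [hs_def]; linarith
  have hd0 : 0 < d := lt_of_le_of_lt (Nat.cast_nonneg m) hm
  set sm : ℝ := Real.sqrt m with hsm_def
  have hsm : 0 ≤ sm := Real.sqrt_nonneg _
  set C : ℝ := (2*R+3)^m * (1+sm)^d with hC
  have hCpos : 0 < C := by positivity
  suffices H : ∀ ε : ℝ, 0 < ε → μH[d] E ≤ ENNReal.ofReal ε by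
    refine le_antisymm (ENNReal.le_of_forall_pos_le_add fun ε hε _ => ?_) (zero_le)
    rw [zero_add]
    simpa [ENNReal.ofReal_coe_nnreal] using H ε (by exact_mod_cast hε)
  intro ε hε
  set ε₁ : ℝ := ε / (2*(C+1)) with hε₁def
  have hε₁ : 0 < ε₁ := by positivity
  -- extract covers of the projection at every scale
  have hcov : ∀ ρ : ℝ, 0 < ρ → ∃ u : ℕ → Set (Euc n),
      (projE n m '' E ⊆ ⋃ k, u k) ∧ (∀ k, EMetric.diam (u k) ≤ ENNReal.ofReal ρ) ∧
      (∑' k, ⨆ _ : (u k).Nonempty, EMetric.diam (u k) ^ s) < ENNReal.ofReal ε₁ := by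
    intro ρ hρ
    rw [Measure.hausdorffMeasure_apply] at h
    have h0 := ENNReal.iSup_eq_zero.mp (ENNReal.iSup_eq_zero.mp h (ENNReal.ofReal ρ))
      (by simpa using ENNReal.ofReal_pos.mpr hρ)
    have hlt : (⨅ (t : ℕ → Set (Euc n)) (_ : projE n m '' E ⊆ ⋃ k, t k)
        (_ : ∀ k, EMetric.diam (t k) ≤ ENNReal.ofReal ρ),
        ∑' k, ⨆ _ : (t k).Nonempty, EMetric.diam (t k) ^ s) < ENNReal.ofReal ε₁ := by
      exact lt_of_eq_of_lt h0 (ENNReal.ofReal_pos.mpr hε₁)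
    simp only [iInf_lt_iff] at hlt
    obtain ⟨u, h1, h2, h3⟩ := hlt
    exact ⟨u, h1, h2, h3⟩
  -- the main construction: a cover of E at scale (1+√m)·ρ with controlled sum
  have main : ∀ ρ : ℝ, 0 < ρ → ρ ≤ 1 → ∃ t : ℕ × (Fin m → ℤ) → Set (Euc (n+m)),
      (E ⊆ ⋃ i, t i) ∧ (∀ i, EMetric.diam (t i) ≤ ENNReal.ofReal ((1+sm)*ρ)) ∧
      (∑' i, EMetric.diam (t i) ^ d ≤ ENNReal.ofReal ε) := by
    intro ρ hρ hρ1
    obtain ⟨u, hu_cov, hu_diam, hu_sum⟩ := hcov ρ hρ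
    set δ : ℕ → ℝ := fun k => (EMetric.diam (u k)).toReal with hδdef
    have hδ0 : ∀ k, 0 ≤ δ k := fun k => ENNReal.toReal_nonneg
    have hδρ : ∀ k, δ k ≤ ρ := fun k => ENNReal.toReal_le_of_le_ofReal hρ.le (hu_diam k)
    have hδne : ∀ k, EMetric.diam (u k) ≠ ⊤ :=
      fun k => ((hu_diam k).trans_lt ENNReal.ofReal_lt_top).ne
    have hδdiam : ∀ k, EMetric.diam (u k) = ENNReal.ofReal (δ k) :=
      fun k => (ENNReal.ofReal_toReal (hδne k)).symm
    set η : ℕ → ℝ := fun k => min ρ ((ε₁ * (1/2)^(k+1)) ^ (1/s)) with hηdef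
    have hη0 : ∀ k, 0 < η k := fun k => lt_min hρ (Real.rpow_pos_of_pos (by positivity) _)
    set σ : ℕ → ℝ := fun k => max (δ k) (η k) with hσdef
    have hσ0 : ∀ k, 0 < σ k := fun k => lt_of_lt_of_le (hη0 k) (le_max_right _ _)
    have hσρ : ∀ k, σ k ≤ ρ := fun k => max_le (hδρ k) (min_le_left _ _)
    set t : ℕ × (Fin m → ℤ) → Set (Euc (n+m)) := fun p =>
      {x | ‖x‖ ≤ R ∧ projE n m x ∈ u p.1 ∧ ∀ i : Fin m,
        x (Fin.natAdd n i) ∈ Set.Ico ((p.2 i : ℝ) * σ p.1) (((p.2 i : ℝ) + 1) * σ p.1)}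
      with htdef
    -- diameter bound
    have hdiam : ∀ p, EMetric.diam (t p) ≤ ENNReal.ofReal ((1+sm) * σ p.1) := by
      rintro ⟨k, z⟩
      apply EMetric.diam_le
      intro x hx y hy
      rw [edist_dist]
      apply ENNReal.ofReal_le_ofReal
      obtain ⟨hx1, hx2, hx3⟩ := hx
      obtain ⟨hy1, hy2, hy3⟩ := hy
      have b1 : dist (projE n m x) (projE n m y) ≤ δ k := by
        rw [dist_edist]
        exact ENNReal.toReal_mono (hδne k) (EMetric.edist_le_diam_of_mem hx2 hy2)
      have b2 : Real.sqrt (∑ i : Fin m, (x (Fin.natAdd n i) - y (Fin.natAdd n i)) ^ 2)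
          ≤ sm * σ k := by
        have hsum : (∑ i : Fin m, (x (Fin.natAdd n i) - y (Fin.natAdd n i)) ^ 2)
            ≤ (m : ℝ) * (σ k)^2 := by
          calc (∑ i : Fin m, (x (Fin.natAdd n i) - y (Fin.natAdd n i)) ^ 2)
              ≤ ∑ _i : Fin m, (σ k)^2 := by
                apply Finset.sum_le_sum
                intro i _
                obtain ⟨ha1, ha2⟩ := hx3 i
                obtain ⟨hb1, hb2⟩ := hy3 i
                have hexp : ((z i : ℝ) + 1) * σ k = (z i : ℝ) * σ k + σ k := by ring
                apply sq_le_sq' <;> nlinarith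
          _ = (m : ℝ) * (σ k)^2 := by simp [mul_comm]
        calc Real.sqrt (∑ i : Fin m, (x (Fin.natAdd n i) - y (Fin.natAdd n i)) ^ 2)
            ≤ Real.sqrt ((m:ℝ) * (σ k)^2) := Real.sqrt_le_sqrt hsum
        _ = sm * σ k := by
            rw [Real.sqrt_mul (Nat.cast_nonneg m), Real.sqrt_sq (hσ0 k).le]
      calc dist x y ≤ dist (projE n m x) (projE n m y) +
            Real.sqrt (∑ i : Fin m, (x (Fin.natAdd n i) - y (Fin.natAdd n i)) ^ 2) :=
          dist_le_split n m x y
      _ ≤ δ k + sm * σ k := add_le_add b1 b2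
      _ ≤ σ k + sm * σ k := by nlinarith [le_max_left (δ k) (η k)]
      _ = (1+sm) * σ k := by ring
    refine ⟨t, ?_, ?_, ?_⟩
    · -- covering
      intro x hx
      obtain ⟨k, hk⟩ := mem_iUnion.mp (hu_cov (mem_image_of_mem _ hx))
      refine mem_iUnion.mpr ⟨(k, fun i => ⌊x (Fin.natAdd n i) / σ k⌋), hE x hx, hk, fun i => ?_⟩
      constructor
      · calc (⌊x (Fin.natAdd n i) / σ k⌋ : ℝ) * σ k
            ≤ (x (Fin.natAdd n i) / σ k) * σ k := by
              have := Int.floor_le (x (Fin.natAdd n i) / σ k)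
              nlinarith [hσ0 k]
        _ = x (Fin.natAdd n i) := by field_simp [(hσ0 k).ne']
      · have := Int.lt_floor_add_one (x (Fin.natAdd n i) / σ k)
        calc x (Fin.natAdd n i) = (x (Fin.natAdd n i) / σ k) * σ k := by field_simp [(hσ0 k).ne']
        _ < ((⌊x (Fin.natAdd n i) / σ k⌋ : ℝ) + 1) * σ k := by nlinarith [hσ0 k]
    · -- diameters at scale
      intro p
      exact (hdiam p).trans (ENNReal.ofReal_le_ofReal
        (by nlinarith [hσρ p.1, hσ0 p.1]))
    · -- the sum
      set N : ℕ → ℤ := fun k => ⌈R / σ k⌉ with hNdef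
      have hN0 : ∀ k, 0 ≤ N k := fun k => Int.ceil_nonneg (by positivity)
      set F : ℕ → Finset (Fin m → ℤ) :=
        fun k => Fintype.piFinset fun _ => Finset.Icc (-(N k)) (N k) with hFdef
      have hempty : ∀ k z, z ∉ F k → t (k, z) = ∅ := by
        intro k z hz
        rw [Set.eq_empty_iff_forall_notMem]
        intro x hxmem
        obtain ⟨hx1, hx2, hx3⟩ := hxmem
        apply hz
        rw [Fintype.mem_piFinset]
        intro i
        rw [Finset.mem_Icc]
        have habs : |x (Fin.natAdd n i)| ≤ R := (abs_coord_le_norm x _).trans hx1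
        obtain ⟨ha1, ha2⟩ := hx3 i
        have h1 : (z i : ℝ) ≤ N k := by
          calc (z i : ℝ) ≤ R / σ k := by
                rw [le_div_iff₀ (hσ0 k)]
                calc (z i : ℝ) * σ k ≤ x (Fin.natAdd n i) := ha1
                _ ≤ R := (le_abs_self _).trans habs
          _ ≤ N k := Int.le_ceil _
        have h2 : -(N k) ≤ z i := by
          have hl : -R ≤ x (Fin.natAdd n i) := by
            have := neg_abs_le (x (Fin.natAdd n i)); linarith
          have hlt : -R < ((z i : ℝ) + 1) * σ k := lt_of_le_of_lt hl ha2
          have hq : -((z i : ℝ) + 1) < R / σ k := (lt_div_iff₀ (hσ0 k)).mpr (by nlinarith)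
          have hq2 : (-(z i) : ℝ) - 1 < (N k : ℝ) := by
            have := Int.le_ceil (R / σ k); push_cast; push_cast at hq; linarith
          have hq3 : -(z i) - 1 < N k := by exact_mod_cast hq2
          omega
        refine ⟨h2, ?_⟩
        exact_mod_cast h1
      -- per-piece rpow bound
      have hpiece : ∀ p : ℕ × (Fin m → ℤ),
          EMetric.diam (t p) ^ d ≤ ENNReal.ofReal (((1+sm) * σ p.1) ^ d) := by
        intro p
        calc EMetric.diam (t p) ^ d ≤ (ENNReal.ofReal ((1+sm) * σ p.1)) ^ d :=
          ENNReal.rpow_le_rpow (hdiam p) hd0.le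
        _ = ENNReal.ofReal (((1+sm) * σ p.1) ^ d) :=
          ENNReal.ofReal_rpow_of_nonneg (by positivity) hd0.le
      -- cardinality bound
      have hσ1 : ∀ k, σ k ≤ 1 := fun k => (hσρ k).trans hρ1
      have hcard : ∀ k, ((F k).card : ℝ) ≤ ((2*R+3) / σ k) ^ m := by
        intro k
        have hceil : (N k : ℝ) < R / σ k + 1 := Int.ceil_lt_add_one _
        have hc : (Finset.Icc (-(N k)) (N k)).card = (2 * N k + 1).toNat := by
          rw [Int.card_Icc]; congr 1; ring
        have hcr : (((Finset.Icc (-(N k)) (N k)).card : ℕ) : ℝ) ≤ (2*R+3) / σ k := by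
          rw [hc]
          have h1 : ((2 * N k + 1).toNat : ℤ) = 2 * N k + 1 :=
            Int.toNat_of_nonneg (by have := hN0 k; omega)
          have h2 : (((2 * N k + 1).toNat : ℕ) : ℝ) = 2 * (N k : ℝ) + 1 := by
            exact_mod_cast congrArg (fun z : ℤ => (z : ℝ)) h1
          rw [h2, le_div_iff₀ (hσ0 k)]
          have h4 : (N k : ℝ) * σ k ≤ (R / σ k + 1) * σ k :=
            mul_le_mul_of_nonneg_right hceil.le (hσ0 k).le
          have h5 : (R / σ k + 1) * σ k = R + σ k := by rw [add_mul, div_mul_cancel₀ _ (hσ0 k).ne', one_mul]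
          have h6 : (2*(N k : ℝ)+1) * σ k = 2*((N k : ℝ) * σ k) + σ k := by ring
          rw [h6]
          linarith [hσ1 k, (hσ0 k).le]
        have : (F k).card = ((Finset.Icc (-(N k)) (N k)).card) ^ m := by
          rw [hFdef, Fintype.card_piFinset]
          simp
        rw [this]
        push_cast
        exact pow_le_pow_left₀ (Nat.cast_nonneg _) hcr m
      -- inner tsum bound for each k
      have hksum : ∀ k, (∑' z : Fin m → ℤ, EMetric.diam (t (k,z)) ^ d) ≤
          ⨆ _ : (u k).Nonempty, ENNReal.ofReal (C * σ k ^ s) := by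
        intro k
        by_cases hne : (u k).Nonempty
        · rw [iSup_pos hne]
          have hzero : ∀ z ∉ F k, EMetric.diam (t (k,z)) ^ d = 0 := by
            intro z hz
            rw [hempty k z hz, show EMetric.diam (∅ : Set (Euc (n+m))) = 0 from EMetric.diam_empty, ENNReal.zero_rpow_of_pos hd0]
          rw [tsum_eq_sum hzero]
          calc ∑ z ∈ F k, EMetric.diam (t (k,z)) ^ d
              ≤ ∑ _z ∈ F k, ENNReal.ofReal (((1+sm) * σ k) ^ d) :=
                Finset.sum_le_sum fun z _ => hpiece (k, z)
          _ = ((F k).card : ℝ≥0∞) * ENNReal.ofReal (((1+sm) * σ k) ^ d) := by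
              rw [Finset.sum_const, nsmul_eq_mul]
          _ ≤ ENNReal.ofReal (((2*R+3)/σ k)^m) * ENNReal.ofReal (((1+sm) * σ k) ^ d) := by
              apply mul_le_mul_left
              rw [← ENNReal.ofReal_natCast]
              exact ENNReal.ofReal_le_ofReal (hcard k)
          _ = ENNReal.ofReal (((2*R+3)/σ k)^m * ((1+sm) * σ k) ^ d) :=
              (ENNReal.ofReal_mul (by positivity)).symm
          _ = ENNReal.ofReal (C * σ k ^ s) := by
              congr 1
              rw [div_pow, Real.mul_rpow (by positivity) (hσ0 k).le, hs_def,
                Real.rpow_sub (hσ0 k), Real.rpow_natCast, hC]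
              ring
        · have hteq : ∀ z, t (k,z) = ∅ := by
            intro z
            rw [Set.eq_empty_iff_forall_notMem]
            rintro x ⟨-, hx2, -⟩
            exact hne ⟨_, hx2⟩
          have hz0 : (∑' z : Fin m → ℤ, EMetric.diam (t (k,z)) ^ d) = 0 := by
            simp [hteq, show EMetric.diam (∅ : Set (Euc (n+m))) = 0 from EMetric.diam_empty, ENNReal.zero_rpow_of_pos hd0]
          rw [hz0]
          exact zero_le
      -- splitting σ^s
      have hσs : ∀ k, σ k ^ s ≤ δ k ^ s + η k ^ s := by
        intro k
        rcases max_choice (δ k) (η k) with hmax | hmax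
        · have : σ k = δ k := hmax
          rw [this]
          exact le_add_of_nonneg_right (Real.rpow_nonneg (hη0 k).le s)
        · have : σ k = η k := hmax
          rw [this]
          exact le_add_of_nonneg_left (Real.rpow_nonneg (hδ0 k) s)
      have hηs : ∀ k : ℕ, η k ^ s ≤ ε₁ * (1/2)^(k+1) := by
        intro k
        have h1 : η k ≤ (ε₁ * (1/2)^(k+1)) ^ (1/s) := min_le_right _ _
        calc η k ^ s ≤ ((ε₁ * (1/2)^(k+1)) ^ (1/s)) ^ s :=
          Real.rpow_le_rpow (hη0 k).le h1 hs.le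
        _ = ε₁ * (1/2)^(k+1) := by
          rw [← Real.rpow_mul (by positivity), one_div_mul_cancel hs.ne', Real.rpow_one]
      -- sup estimate
      have hsup : ∀ k : ℕ, (⨆ _ : (u k).Nonempty, ENNReal.ofReal (C * σ k ^ s)) ≤
          (⨆ _ : (u k).Nonempty, ENNReal.ofReal C * EMetric.diam (u k) ^ s)
            + ENNReal.ofReal C * ENNReal.ofReal (ε₁ * (1/2)^(k+1)) := by
        intro k
        apply iSup_le
        intro hne
        have e1 : ENNReal.ofReal (C * σ k ^ s)
            ≤ ENNReal.ofReal (C * δ k ^ s) + ENNReal.ofReal (C * η k ^ s) := by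
          refine le_trans (ENNReal.ofReal_le_ofReal ?_) ENNReal.ofReal_add_le
          have := hσs k
          nlinarith [Real.rpow_nonneg (hδ0 k) s, Real.rpow_nonneg (hη0 k).le s]
        refine e1.trans (add_le_add ?_ ?_)
        · have e2 : ENNReal.ofReal (C * δ k ^ s) = ENNReal.ofReal C * EMetric.diam (u k) ^ s := by
            rw [ENNReal.ofReal_mul hCpos.le, hδdiam k,
              ENNReal.ofReal_rpow_of_nonneg (hδ0 k) hs.le]
          rw [e2]
          exact le_iSup_of_le hne le_rfl
        · rw [← ENNReal.ofReal_mul hCpos.le]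
          exact ENNReal.ofReal_le_ofReal
            (mul_le_mul_of_nonneg_left (hηs k) hCpos.le)
      -- geometric series
      have hgeo : (∑' k : ℕ, ENNReal.ofReal (ε₁ * (1/2)^(k+1))) ≤ ENNReal.ofReal ε₁ := by
        have hhalf : ENNReal.ofReal (1/2 : ℝ) = (2:ℝ≥0∞)⁻¹ := by
          rw [show (1/2 : ℝ) = (2:ℝ)⁻¹ by norm_num, ENNReal.ofReal_inv_of_pos (by norm_num)]
          norm_num
        have e3 : ∀ k : ℕ, ENNReal.ofReal (ε₁ * (1/2)^(k+1))
            = ENNReal.ofReal ε₁ * (2:ℝ≥0∞)⁻¹^(k+1) := by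
          intro k
          rw [ENNReal.ofReal_mul hε₁.le, ENNReal.ofReal_pow (by norm_num), hhalf]
        calc (∑' k : ℕ, ENNReal.ofReal (ε₁ * (1/2)^(k+1)))
            = ENNReal.ofReal ε₁ * ∑' k : ℕ, (2:ℝ≥0∞)⁻¹^(k+1) := by
              rw [← ENNReal.tsum_mul_left]; exact tsum_congr e3
        _ = ENNReal.ofReal ε₁ * (2⁻¹ * (1 - 2⁻¹)⁻¹) := by
              rw [ENNReal.tsum_geometric_add_one]
        _ ≤ ENNReal.ofReal ε₁ := by
              rw [ENNReal.one_sub_inv_two, inv_inv,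
                ENNReal.inv_mul_cancel (by norm_num) (by norm_num), mul_one]
      -- assemble
      calc (∑' i : ℕ × (Fin m → ℤ), EMetric.diam (t i) ^ d)
          = ∑' k, ∑' z, EMetric.diam (t (k,z)) ^ d := ENNReal.tsum_prod'
      _ ≤ ∑' k : ℕ, ((⨆ _ : (u k).Nonempty, ENNReal.ofReal C * EMetric.diam (u k) ^ s)
            + ENNReal.ofReal C * ENNReal.ofReal (ε₁ * (1/2)^(k+1))) :=
          ENNReal.tsum_le_tsum (fun k => (hksum k).trans (hsup k))
      _ = (∑' k : ℕ, ⨆ _ : (u k).Nonempty, ENNReal.ofReal C * EMetric.diam (u k) ^ s)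
            + ∑' k : ℕ, ENNReal.ofReal C * ENNReal.ofReal (ε₁ * (1/2)^(k+1)) :=
          ENNReal.tsum_add
      _ ≤ ENNReal.ofReal C * ENNReal.ofReal ε₁ + ENNReal.ofReal C * ENNReal.ofReal ε₁ := by
          apply add_le_add
          · calc (∑' k : ℕ, ⨆ _ : (u k).Nonempty, ENNReal.ofReal C * EMetric.diam (u k) ^ s)
                = ENNReal.ofReal C * ∑' k : ℕ, ⨆ _ : (u k).Nonempty, EMetric.diam (u k) ^ s := by
                  rw [← ENNReal.tsum_mul_left]
                  exact tsum_congr fun k => (ENNReal.mul_iSup _ _).symm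
            _ ≤ _ := mul_le_mul_right hu_sum.le _
          · rw [ENNReal.tsum_mul_left]
            exact mul_le_mul_right hgeo _
      _ ≤ ENNReal.ofReal ε := by
          rw [← ENNReal.ofReal_mul hCpos.le,
            ← ENNReal.ofReal_add (by positivity) (by positivity)]
          apply ENNReal.ofReal_le_ofReal
          have h2 : C * ε₁ + C * ε₁ = ε * (C/(C+1)) := by
            rw [hε₁def]; field_simp; ring
          rw [h2]
          have h3 : ε * (C/(C+1)) ≤ ε * 1 := by
            apply mul_le_mul_of_nonneg_left _ hε.le
            rw [div_le_one (by positivity)]; linarith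
          linarith
  -- apply the liminf bound
  have hρpos : ∀ q : ℕ, (0:ℝ) < 1/(q+1) := fun q => by positivity
  have hρle : ∀ q : ℕ, (1:ℝ)/(q+1) ≤ 1 := by
    intro q
    rw [div_le_one (by positivity)]
    have : (0:ℝ) ≤ q := Nat.cast_nonneg q
    linarith
  choose T hT1 hT2 hT3 using fun q : ℕ => main (1/(q+1)) (hρpos q) (hρle q)
  have hr : Filter.Tendsto (fun q : ℕ => ENNReal.ofReal ((1+sm)*(1/(q+1))))
      Filter.atTop (𝓝 0) := by
    have h0 : Filter.Tendsto (fun q : ℕ => (1+sm)*(1/(q+1) : ℝ)) Filter.atTop (𝓝 0) := by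
      have h1 := tendsto_one_div_add_atTop_nhds_zero_nat (𝕜 := ℝ)
      simpa using h1.const_mul (1+sm)
    have h2 := (ENNReal.continuous_ofReal.tendsto 0).comp h0
    simpa [Function.comp_def] using h2
  have hlim := Measure.hausdorffMeasure_le_liminf_tsum
    (ι := fun _ : ℕ => ℕ × (Fin m → ℤ)) d E
    (fun q => ENNReal.ofReal ((1+sm)*(1/(q+1)))) hr T
    (Filter.Eventually.of_forall hT2) (Filter.Eventually.of_forall hT1)
  refine hlim.trans ?_
  refine le_trans (Filter.liminf_le_liminf (Filter.Eventually.of_forall hT3)) ?_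
  rw [Filter.liminf_const]

/-- **Null projections give null sets** (Corollary 4.2). If `m ≤ d ≤ m + n`,
`E ⊆ ℝ^{n+m}`, and the projection of `E` onto the first `n` coordinates satisfies
`H^{d-m}(π(E)) = 0`, then `H^d(E) = 0`. -/
theorem hausdorffMeasure_eq_zero_of_proj (m n : ℕ) (d : ℝ)
    (hd1 : (m : ℝ) ≤ d) (hd2 : d ≤ (m : ℝ) + n)
    (E : Set (Euc (n + m))) (h : μH[d - (m : ℝ)] (projE n m '' E) = 0) :
    μH[d] E = 0 := by
  rcases eq_or_lt_of_le hd1 with heq | hlt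
  · rcases Set.eq_empty_or_nonempty E with rfl | ⟨x, hx⟩
    · simp
    · exfalso
      have hd : d - (m:ℝ) = 0 := by linarith
      rw [hd] at h
      have h1 : μH[(0:ℝ)] ({projE n m x} : Set (Euc n)) = 0 :=
        measure_mono_null (singleton_subset_iff.mpr (mem_image_of_mem _ hx)) h
      rw [Measure.hausdorffMeasure_zero_singleton] at h1
      exact one_ne_zero h1
  · have hsub : E ⊆ ⋃ j : ℕ, {x ∈ E | ‖x‖ ≤ (j:ℝ)} := by
      intro x hx
      obtain ⟨j, hj⟩ := exists_nat_ge ‖x‖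
      exact mem_iUnion.mpr ⟨j, hx, hj⟩
    refine measure_mono_null hsub (measure_iUnion_null fun j => ?_)
    refine key m n d hlt j (Nat.cast_nonneg j) _ (fun x hx => hx.2) ?_
    exact measure_mono_null (Set.image_mono (fun x hx => hx.1)) h


end
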